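/- arXiv:1408.2206 — 3 statements merged into one kernel-verified Lean document; each statement's English description precedes it below -/
import Mathlib

section
/- Let s ≥ 1 be an integer and let pₙ*/qₙ* denote the nth convergent of the regular continued fraction expansion of s·e^(1/s). Then for every integer n ≥ 0: (i) p*_{3n} − s·e^(1/s)·q*_{3n} = (1/s^(n+2)) · ∫₀¹ (xⁿ(x−1)^(n+1)/n!) · s·e^(x/s) dx; (ii) p*_{3n+1} − s·e^(1/s)·q*_{3n+1} = −(1/s^(n+2)) · ∫₀¹ (x^(n+1)(x−1)^(n+1)/(n+1)!) · s·e^(x/s) dx; (iii) p*_{3n+2} − s·e^(1/s)·q*_{3n+2} = (1/s^(n+3)) · ∫₀¹ ((x+s−1)·x^(n+1)(x−1)^(n+1)/(n+1)!) · s·e^(x/s) dx. -/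
/-!
Let `R k` be the integral on the right-hand side for the index `k - 1`, so that `R k` should be
`p_{k-1} - α q_{k-1}`. Integration by parts against `s e^{x/s}` gives `R 0 = 1`,
`R 1 = s + 1 - α` and the continuant recurrence `R (k+2) = a (k+1) R (k+1) + R k` with
`a = [s+1; 2s-1, 2, 1, 2s-1, 4, 1, …]`, and the sign of each integrand on `(0,1)` gives
`(-1)^k R k > 0`. Since `a (k+1) ≥ 1`, the recurrence then forces `0 < -R (k+1) / R k < 1`,
so these ratios are the successive fractional parts of the continued fraction algorithm applied
to `α`, whose partial quotients are therefore the `a k`; and `p_k - α q_k` obeys the same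
recurrence with the same initial values.
-/

open Real

/-- The numerator `pₙ` of the `n`th convergent of the regular continued fraction of `α`. -/
noncomputable def cfNum (α : ℝ) (n : ℕ) : ℝ := (GenContFract.of α).nums n

/-- The denominator `qₙ` of the `n`th convergent of the regular continued fraction of `α`. -/
noncomputable def cfDen (α : ℝ) (n : ℕ) : ℝ := (GenContFract.of α).dens n

namespace GenContFract

variable {K : Type*} [Field K] [LinearOrder K] [IsStrictOrderedRing K] [FloorRing K]

theorem IntFractPair.of_intCast_add (a : ℤ) {f : K} (hf : f ∈ Set.Ico 0 1) :
    IntFractPair.of ((a : K) + f) = ⟨a, f⟩ := by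
  have hfloor : ⌊f⌋ = 0 := Int.floor_eq_zero_iff.mpr hf
  simp only [IntFractPair.of, Int.floor_intCast_add, hfloor, add_zero, Int.fract_intCast_add,
    Int.fract_eq_self.mpr hf]

section Errors

variable {v : K} {a : ℕ → ℤ} {R : ℕ → K}

theorem neg_div_mem_Ioo_of_alternating (hrec : ∀ k, R (k + 2) = a (k + 1) * R (k + 1) + R k)
    (ha : ∀ k, 0 < a (k + 1)) (hR : ∀ k, 0 < (-1) ^ k * R k) (k : ℕ) :
    -R (k + 1) / R k ∈ Set.Ioo 0 1 := by
  have hratio : -R (k + 1) / R k = (-1) ^ (k + 1) * R (k + 1) / ((-1) ^ k * R k) := by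
    rw [pow_succ, mul_assoc, mul_div_mul_left _ _ (pow_ne_zero k (neg_ne_zero.mpr one_ne_zero))]
    ring
  -- the positive sequence `(-1)^k R k` then decreases strictly, since `a (k+1) ≥ 1`
  have hstep : (-1) ^ k * R k =
      (-1) ^ (k + 2) * R (k + 2) + a (k + 1) * ((-1) ^ (k + 1) * R (k + 1)) := by
    rw [hrec]; ring
  have ha1 : (1 : K) ≤ a (k + 1) := by exact_mod_cast ha k
  rw [hratio]
  refine ⟨div_pos (hR (k + 1)) (hR k), (div_lt_one (hR k)).mpr ?_⟩
  nlinarith [hR k, hR (k + 1), hR (k + 2)]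

theorem IntFractPair.stream_eq_of_alternating (h0 : R 0 = 1) (h1 : R 1 = a 0 - v)
    (hrec : ∀ k, R (k + 2) = a (k + 1) * R (k + 1) + R k)
    (ha : ∀ k, 0 < a (k + 1)) (hR : ∀ k, 0 < (-1) ^ k * R k) (k : ℕ) :
    IntFractPair.stream v k = some ⟨a k, -R (k + 1) / R k⟩ := by
  have hmem := neg_div_mem_Ioo_of_alternating hrec ha hR
  induction k with
  | zero =>
    rw [IntFractPair.stream_zero,
      ← IntFractPair.of_intCast_add (a 0) (Set.Ioo_subset_Ico_self (hmem 0)), h0, h1]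
    congr 2
    ring
  | succ k ih =>
    rw [IntFractPair.stream_succ_of_some ih (hmem k).1.ne',
      ← IntFractPair.of_intCast_add (a (k + 1)) (Set.Ioo_subset_Ico_self (hmem (k + 1)))]
    have hne (j : ℕ) : R j ≠ 0 := fun hzero => by simpa [hzero] using hR j
    have hk := hne k
    have hk1 := hne (k + 1)
    congr 2
    field_simp
    rw [hrec]
    ring

theorem nums_sub_mul_dens_of_alternating (h0 : R 0 = 1) (h1 : R 1 = a 0 - v)
    (hrec : ∀ k, R (k + 2) = a (k + 1) * R (k + 1) + R k)
    (ha : ∀ k, 0 < a (k + 1)) (hR : ∀ k, 0 < (-1) ^ k * R k) (k : ℕ) :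
    (GenContFract.of v).nums k - v * (GenContFract.of v).dens k = R (k + 1) := by
  have hstream := IntFractPair.stream_eq_of_alternating h0 h1 hrec ha hR
  have hs (n : ℕ) : (GenContFract.of v).s.get? n = some ⟨1, a (n + 1)⟩ :=
    get?_of_eq_some_of_succ_get?_intFractPair_stream (hstream (n + 1))
  have hh : (GenContFract.of v).h = a 0 := by
    have h := hstream 0
    rw [IntFractPair.stream_zero, Option.some.injEq] at h
    rw [of_h_eq_intFractPair_seq1_fst_b, IntFractPair.seq1_fst_eq_of, h]
  induction k using Nat.twoStepInduction with
  | zero => rw [zeroth_num_eq_h, zeroth_den_eq_one, hh, h1]; ring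
  | one => rw [first_num_eq (hs 0), first_den_eq (hs 0), hh, hrec 0, h0, h1]; ring
  | more n ih ih' =>
    rw [nums_recurrence (hs (n + 1)) rfl rfl, dens_recurrence (hs (n + 1)) rfl rfl, hrec (n + 1),
      ← ih, ← ih']
    ring

end Errors

end GenContFract

namespace Komatsu

open intervalIntegral

noncomputable def I (t : ℝ) (m k : ℕ) : ℝ :=
  ∫ x in (0 : ℝ)..1, x ^ m * (x - 1) ^ k * exp (x / t)

noncomputable def J (t : ℝ) (m k : ℕ) : ℝ :=
  ∫ x in (0 : ℝ)..1, (x + t - 1) * x ^ m * (x - 1) ^ k * exp (x / t)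

variable {t : ℝ}

theorem hasDerivAt_mul_exp_div (ht : t ≠ 0) (x : ℝ) :
    HasDerivAt (fun x => t * exp (x / t)) (exp (x / t)) x := by
  refine ((((hasDerivAt_id' x).div_const t).exp).const_mul t).congr_deriv ?_
  field_simp

theorem I_zero_zero (ht : t ≠ 0) : I t 0 0 = t * (exp (1 / t) - 1) := by
  rw [I, integral_eq_sub_of_hasDerivAt (fun x _ => by simpa using hasDerivAt_mul_exp_div ht x)
    (by apply Continuous.intervalIntegrable; fun_prop)]
  simp [mul_sub]

theorem J_zero_zero (ht : t ≠ 0) : J t 0 0 = t := by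
  have hderiv (x : ℝ) : HasDerivAt (fun x => (x - 1) * (t * exp (x / t)))
      ((x + t - 1) * x ^ 0 * (x - 1) ^ 0 * exp (x / t)) x := by
    refine (((hasDerivAt_id' x).sub_const 1).fun_mul (hasDerivAt_mul_exp_div ht x)).congr_deriv ?_
    simp only [pow_zero, mul_one, one_mul]; ring
  rw [J, integral_eq_sub_of_hasDerivAt (fun x _ => hderiv x)
    (by apply Continuous.intervalIntegrable; fun_prop)]
  simp

theorem J_eq (t : ℝ) (m k : ℕ) : J t m k = I t m (k + 1) + t * I t m k := by
  rw [J, I, I, ← integral_const_mul,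
    ← integral_add (by apply Continuous.intervalIntegrable; fun_prop)
      (by apply Continuous.intervalIntegrable; fun_prop)]
  congr 1; ext x; ring

theorem I_succ_left (t : ℝ) (m k : ℕ) : I t (m + 1) k = I t m (k + 1) + I t m k := by
  rw [I, I, I, ← integral_add (by apply Continuous.intervalIntegrable; fun_prop)
    (by apply Continuous.intervalIntegrable; fun_prop)]
  congr 1; ext x; ring

theorem I_succ_succ (ht : t ≠ 0) (m k : ℕ) :
    I t (m + 1) (k + 1) = -t * ((m + 1) * I t m (k + 1) + (k + 1) * I t (m + 1) k) := by
  have hderiv (x : ℝ) : HasDerivAt (fun x => x ^ (m + 1) * (x - 1) ^ (k + 1) * (t * exp (x / t)))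
      (t * (m + 1) * (x ^ m * (x - 1) ^ (k + 1) * exp (x / t)) +
        (t * (k + 1) * (x ^ (m + 1) * (x - 1) ^ k * exp (x / t)) +
          x ^ (m + 1) * (x - 1) ^ (k + 1) * exp (x / t))) x := by
    refine (((hasDerivAt_pow (m + 1) x).fun_mul (((hasDerivAt_id' x).sub_const 1).fun_pow
      (k + 1))).fun_mul (hasDerivAt_mul_exp_div ht x)).congr_deriv ?_
    push_cast; ring
  have hint (m k : ℕ) : IntervalIntegrable (fun x => x ^ m * (x - 1) ^ k * exp (x / t))
      MeasureTheory.volume 0 1 := by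
    apply Continuous.intervalIntegrable; fun_prop
  have hzero := integral_eq_sub_of_hasDerivAt (fun x _ => hderiv x)
    (((hint _ _).const_mul _).add (((hint _ _).const_mul _).add (hint _ _)))
  rw [integral_add ((hint _ _).const_mul _) (((hint _ _).const_mul _).add (hint _ _)),
    integral_add ((hint _ _).const_mul _) (hint _ _), integral_const_mul,
    integral_const_mul] at hzero
  simp only [I]
  linear_combination hzero

theorem neg_one_pow_mul_I_pos (t : ℝ) (m k : ℕ) : 0 < (-1) ^ k * I t m k := by
  rw [I, ← integral_const_mul]
  refine intervalIntegral_pos_of_pos_on (by apply Continuous.intervalIntegrable; fun_prop)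
    (fun x hx => ?_) zero_lt_one
  have h : (-1) ^ k * (x ^ m * (x - 1) ^ k * exp (x / t)) =
      x ^ m * (1 - x) ^ k * exp (x / t) := by
    rw [show 1 - x = -(x - 1) by ring, neg_pow (x - 1)]; ring
  have := hx.1; have := sub_pos.mpr hx.2
  rw [h]; positivity

theorem neg_one_pow_mul_J_pos (ht : 1 ≤ t) (m k : ℕ) : 0 < (-1) ^ k * J t m k := by
  rw [J, ← integral_const_mul]
  refine intervalIntegral_pos_of_pos_on (by apply Continuous.intervalIntegrable; fun_prop)
    (fun x hx => ?_) zero_lt_one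
  have h : (-1) ^ k * ((x + t - 1) * x ^ m * (x - 1) ^ k * exp (x / t)) =
      (x + t - 1) * x ^ m * (1 - x) ^ k * exp (x / t) := by
    rw [show 1 - x = -(x - 1) by ring, neg_pow (x - 1)]; ring
  have := hx.1; have := sub_pos.mpr hx.2
  have : 0 < x + t - 1 := by linarith
  rw [h]; positivity

theorem integral_div_mul_mul_exp_eq_I (t c : ℝ) (m k : ℕ) :
    ∫ x in (0 : ℝ)..1, x ^ m * (x - 1) ^ k / c * (t * exp (x / t)) = t / c * I t m k := by
  rw [I, ← integral_const_mul]; congr 1; ext x; ring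

theorem integral_div_mul_mul_exp_eq_J (t c : ℝ) (m k : ℕ) :
    ∫ x in (0 : ℝ)..1, (x + t - 1) * x ^ m * (x - 1) ^ k / c * (t * exp (x / t)) =
      t / c * J t m k := by
  rw [J, ← integral_const_mul]; congr 1; ext x; ring

open Nat

def partialQuot (s : ℕ) : ℕ → ℤ
  | 0 => s + 1
  | k + 1 => if k % 3 = 0 then 2 * s - 1 else if k % 3 = 1 then 2 * ((k / 3 : ℕ) : ℤ) + 2 else 1

-- `err s k` will be `p_{k-1} - α q_{k-1}` for `α = s e^{1/s}`, with `p_{-1} = 1`, `q_{-1} = 0`.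
noncomputable def err (s k : ℕ) : ℝ :=
  if k % 3 = 0 then J s (k / 3) (k / 3) / (s ^ (k / 3 + 1) * (k / 3)!)
  else if k % 3 = 1 then I s (k / 3) (k / 3 + 1) / (s ^ (k / 3 + 1) * (k / 3)!)
  else -I s (k / 3 + 1) (k / 3 + 1) / (s ^ (k / 3 + 1) * (k / 3 + 1)!)

theorem err_three_mul (s n : ℕ) : err s (3 * n) = J s n n / (s ^ (n + 1) * n !) := by
  simp [err, Nat.mul_mod_right, Nat.mul_div_cancel_left n three_pos]

theorem err_three_mul_add_one (s n : ℕ) :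
    err s (3 * n + 1) = I s n (n + 1) / (s ^ (n + 1) * n !) := by
  have h1 : (3 * n + 1) % 3 = 1 := by omega
  have h2 : (3 * n + 1) / 3 = n := by omega
  simp [err, h1, h2]

theorem err_three_mul_add_two (s n : ℕ) :
    err s (3 * n + 2) = -I s (n + 1) (n + 1) / (s ^ (n + 1) * (n + 1)!) := by
  have h1 : (3 * n + 2) % 3 = 2 := by omega
  have h2 : (3 * n + 2) / 3 = n := by omega
  simp [err, h1, h2]

variable {s : ℕ}

theorem partialQuot_succ_pos (hs : 1 ≤ s) (k : ℕ) : 0 < partialQuot s (k + 1) := by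
  simp only [partialQuot]
  split_ifs <;> omega

theorem err_zero (hs : 1 ≤ s) : err s 0 = 1 := by
  have hs0 : (s : ℝ) ≠ 0 := Nat.cast_ne_zero.mpr (by omega)
  rw [show err s 0 = _ from err_three_mul s 0, J_zero_zero hs0]
  simp [hs0]

theorem err_one (hs : 1 ≤ s) : err s 1 = partialQuot s 0 - s * exp (1 / s) := by
  have hs0 : (s : ℝ) ≠ 0 := Nat.cast_ne_zero.mpr (by omega)
  have hI : I s 0 1 = s - s * I s 0 0 := by linear_combination (J_zero_zero hs0) - (J_eq s 0 0)
  rw [show err s 1 = _ from err_three_mul_add_one s 0, hI, I_zero_zero hs0, partialQuot]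
  field_simp
  push_cast
  ring

theorem err_add_two (hs : 1 ≤ s) (k : ℕ) :
    err s (k + 2) = partialQuot s (k + 1) * err s (k + 1) + err s k := by
  have hs0 : (s : ℝ) ≠ 0 := Nat.cast_ne_zero.mpr (by omega)
  obtain ⟨n, rfl | rfl | rfl⟩ : ∃ n, k = 3 * n ∨ k = 3 * n + 1 ∨ k = 3 * n + 2 :=
    ⟨k / 3, by omega⟩
  · have hq : partialQuot s (3 * n + 1) = 2 * s - 1 := by simp [partialQuot]
    rw [err_three_mul_add_two, err_three_mul_add_one, err_three_mul, hq, J_eq,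
      I_succ_succ hs0, I_succ_left, factorial_succ]
    field_simp
    push_cast
    ring
  · have hq : partialQuot s (3 * n + 1 + 1) = 2 * n + 2 := by
      simp [partialQuot, show (3 * n + 1) % 3 = 1 by omega, show (3 * n + 1) / 3 = n by omega]
    have hsplit := eq_sub_of_add_eq (I_succ_left s n (n + 1)).symm
    rw [hq, show 3 * n + 1 + 2 = 3 * (n + 1) by ring, err_three_mul, err_three_mul_add_two,
      err_three_mul_add_one, J_eq, I_succ_succ hs0, hsplit, factorial_succ]
    field_simp
    push_cast
    ring
  · have hq : partialQuot s (3 * n + 2 + 1) = 1 := by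
      simp [partialQuot, show (3 * n + 2) % 3 = 2 by omega]
    rw [hq, show 3 * n + 2 + 2 = 3 * (n + 1) + 1 by ring,
      show 3 * n + 2 + 1 = 3 * (n + 1) by ring, err_three_mul_add_one, err_three_mul,
      err_three_mul_add_two, J_eq]
    field_simp
    ring

theorem neg_one_pow_mul_err_pos (hs : 1 ≤ s) (k : ℕ) : 0 < (-1) ^ k * err s k := by
  have hpow (n r : ℕ) : (-1 : ℝ) ^ (3 * n + r) = (-1) ^ (n + r) := by
    rw [show 3 * n + r = n + r + 2 * n by ring, pow_add _ (n + r), pow_mul]; norm_num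
  obtain ⟨n, rfl | rfl | rfl⟩ : ∃ n, k = 3 * n ∨ k = 3 * n + 1 ∨ k = 3 * n + 2 :=
    ⟨k / 3, by omega⟩
  · rw [err_three_mul, ← add_zero (3 * n), hpow, add_zero, mul_div_assoc']
    exact div_pos (neg_one_pow_mul_J_pos (by exact_mod_cast hs) n n) (by positivity)
  · rw [err_three_mul_add_one, hpow, mul_div_assoc']
    exact div_pos (neg_one_pow_mul_I_pos _ n (n + 1)) (by positivity)
  · have hsign : -(-1 : ℝ) ^ (n + 2) = (-1) ^ (n + 1) := by ring
    rw [err_three_mul_add_two, hpow, mul_div_assoc', mul_neg, ← neg_mul, hsign]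
    exact div_pos (neg_one_pow_mul_I_pos _ (n + 1) (n + 1)) (by positivity)

end Komatsu

theorem komatsu_integral_formulas_star (s : ℕ) (hs : 1 ≤ s) :
    let α : ℝ := (s : ℝ) * Real.exp (1 / (s : ℝ))
    ∀ n : ℕ,
      (cfNum α (3 * n) - α * cfDen α (3 * n) =
        (1 / (s : ℝ) ^ (n + 2)) *
          ∫ x in (0:ℝ)..1,
            (x ^ n * (x - 1) ^ (n + 1) / (n.factorial : ℝ)) *
              ((s : ℝ) * Real.exp (x / (s : ℝ))) ) ∧
      (cfNum α (3 * n + 1) - α * cfDen α (3 * n + 1) =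
        -(1 / (s : ℝ) ^ (n + 2)) *
          ∫ x in (0:ℝ)..1,
            (x ^ (n + 1) * (x - 1) ^ (n + 1) / ((n + 1).factorial : ℝ)) *
              ((s : ℝ) * Real.exp (x / (s : ℝ))) ) ∧
      (cfNum α (3 * n + 2) - α * cfDen α (3 * n + 2) =
        (1 / (s : ℝ) ^ (n + 3)) *
          ∫ x in (0:ℝ)..1,
            ((x + (s : ℝ) - 1) * x ^ (n + 1) * (x - 1) ^ (n + 1) / ((n + 1).factorial : ℝ)) *
              ((s : ℝ) * Real.exp (x / (s : ℝ))) ) := by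
  intro α n
  have herr (k : ℕ) : cfNum α k - α * cfDen α k = Komatsu.err s (k + 1) :=
    GenContFract.nums_sub_mul_dens_of_alternating (Komatsu.err_zero hs) (Komatsu.err_one hs)
      (Komatsu.err_add_two hs) (Komatsu.partialQuot_succ_pos hs)
      (Komatsu.neg_one_pow_mul_err_pos hs) k
  have hs0 : (s : ℝ) ≠ 0 := Nat.cast_ne_zero.mpr (by omega)
  refine ⟨?_, ?_, ?_⟩
  · rw [herr, Komatsu.err_three_mul_add_one, Komatsu.integral_div_mul_mul_exp_eq_I]
    field_simp
    ring
  · rw [herr, Komatsu.err_three_mul_add_two, Komatsu.integral_div_mul_mul_exp_eq_I]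
    field_simp
    ring
  · rw [herr, show 3 * n + 2 + 1 = 3 * (n + 1) by ring, Komatsu.err_three_mul,
      Komatsu.integral_div_mul_mul_exp_eq_J]
    field_simp
    ring
end

section
/- Let pₙ/qₙ denote the nth convergent of the regular continued fraction expansion of e. Then ∑_{n≥0} |qₙ·e − pₙ| = (e/4) · (−1 + 10 · ∑_{n≥0} (−1)ⁿ / ((n+1)! · (2n² + 7n + 3))). -/
open Real

/-!
As in Cohn's proof of the continued fraction `e = [2; 1, 2, 1, 1, 4, 1, 1, 6, …]`, the integrals
`I(m, k) = ∫₀¹ xᵐ (1 - x)ᵏ eˣ dx`, normalised by `m!`, satisfy the recurrences of the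
continued fraction of `e`, so they are the errors `|qₙ e - pₙ|`. These come in blocks
`B_k, C_k, A_{k+1}` whose sum is `2 B_k`, and summing `B_k = ∫₀¹ x eˣ (x(1 - x))ᵏ / k!` under the
integral gives `∫₀¹ x e^{2x - x²} dx = e ∫₀¹ e^{-x²} dx - (e - 1) / 2`. Expanding `e^{-x²}`
termwise and decomposing `1 / ((2n + 1)(n + 3))` into partial fractions gives the stated series.
-/

open GenContFract
open scoped Nat

theorem GenContFract.IntFractPair.of_intCast_add_s14 {a : ℤ} {t : ℝ} (h₀ : 0 ≤ t) (h₁ : t < 1) :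
    IntFractPair.of ((a : ℝ) + t) = ⟨a, t⟩ := by
  have hfloor : ⌊t⌋ = 0 := Int.floor_eq_zero_iff.mpr ⟨h₀, h₁⟩
  simp [IntFractPair.of, Int.floor_intCast_add, hfloor, Int.fract_intCast_add,
    Int.fract_eq_self.mpr ⟨h₀, h₁⟩]

/-- `a` are the partial quotients of `α` and `r n / r (n + 1)` its complete quotients; up to
scaling, `r n` is the error `|q_{n-1} α - p_{n-1}|`. -/
structure IsCFRemainders (α : ℝ) (a : ℕ → ℤ) (r : ℕ → ℝ) : Prop where
  pos : ∀ n, 0 < r n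
  one_le : ∀ n, 1 ≤ a (n + 1)
  recurrence : ∀ n, r n = a (n + 1) * r (n + 1) + r (n + 2)
  init : α = a 0 + r 1 / r 0

namespace IsCFRemainders

variable {α : ℝ} {a : ℕ → ℤ} {r : ℕ → ℝ}

theorem succ_lt (h : IsCFRemainders α a r) (n : ℕ) : r (n + 1) < r n := by
  have := h.pos (n + 2)
  have := h.pos (n + 1)
  have : (1 : ℝ) ≤ a (n + 1) := by exact_mod_cast h.one_le n
  nlinarith [h.recurrence n]

theorem ratio_mem_Ico (h : IsCFRemainders α a r) (n : ℕ) :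
    0 ≤ r (n + 1) / r n ∧ r (n + 1) / r n < 1 :=
  ⟨(div_pos (h.pos _) (h.pos _)).le, (div_lt_one (h.pos n)).mpr (h.succ_lt n)⟩

theorem inv_ratio (h : IsCFRemainders α a r) (n : ℕ) :
    (r (n + 1) / r n)⁻¹ = a (n + 1) + r (n + 2) / r (n + 1) := by
  rw [inv_div, h.recurrence n, add_div, mul_div_assoc, div_self (h.pos (n + 1)).ne', mul_one]

theorem stream_eq (h : IsCFRemainders α a r) (n : ℕ) :
    IntFractPair.stream α n = some ⟨a n, r (n + 1) / r n⟩ := by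
  induction n with
  | zero =>
    rw [IntFractPair.stream_zero, h.init,
      IntFractPair.of_intCast_add_s14 (h.ratio_mem_Ico 0).1 (h.ratio_mem_Ico 0).2]
  | succ n ih =>
    rw [IntFractPair.stream_succ_of_some ih (div_pos (h.pos _) (h.pos _)).ne', h.inv_ratio,
      IntFractPair.of_intCast_add_s14 (h.ratio_mem_Ico _).1 (h.ratio_mem_Ico _).2]

theorem seq_get? (h : IsCFRemainders α a r) (n : ℕ) :
    (GenContFract.of α).s.get? n = some ⟨1, a (n + 1)⟩ :=
  get?_of_eq_some_of_succ_get?_intFractPair_stream (h.stream_eq (n + 1))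

theorem head_eq (h : IsCFRemainders α a r) : (GenContFract.of α).h = a 0 := by
  rw [of_h_eq_floor, h.init, Int.floor_intCast_add,
    Int.floor_eq_zero_iff.mpr (h.ratio_mem_Ico 0), add_zero]

theorem den_mul_sub_num (h : IsCFRemainders α a r) (n : ℕ) :
    cfDen α n * α - cfNum α n = (-1) ^ n * (r (n + 1) / r 0) := by
  induction n using Nat.twoStepInduction with
  | zero =>
    rw [cfDen, cfNum, zeroth_den_eq_one, zeroth_num_eq_h, h.head_eq, h.init]
    ring
  | one =>
    rw [cfDen, cfNum, first_den_eq (h.seq_get? 0), first_num_eq (h.seq_get? 0), h.head_eq, h.init]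
    field_simp [(h.pos 0).ne']
    linear_combination -h.recurrence 0
  | more n ih₀ ih₁ =>
    have hnum := nums_recurrence (h.seq_get? (n + 1)) rfl rfl
    have hden := dens_recurrence (h.seq_get? (n + 1)) rfl rfl
    simp only [cfDen, cfNum] at ih₀ ih₁ ⊢
    rw [hnum, hden]
    linear_combination (a (n + 2) : ℝ) * ih₁ + ih₀ + (-1) ^ n / r 0 * h.recurrence (n + 1)

theorem abs_den_mul_sub_num (h : IsCFRemainders α a r) (n : ℕ) :
    |cfDen α n * α - cfNum α n| = r (n + 1) / r 0 := by
  rw [h.den_mul_sub_num, abs_mul, abs_neg_one_pow, one_mul,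
    abs_of_pos (div_pos (h.pos _) (h.pos _))]

end IsCFRemainders

theorem hasSum_of_nonneg_of_hasSum_sum_range_mul_add {f : ℕ → ℝ} (hf : 0 ≤ f) (N : ℕ) [NeZero N]
    {s : ℝ} (h : HasSum (fun k ↦ ∑ i ∈ Finset.range N, f (N * k + i)) s) : HasSum f s := by
  have hblock (k : ℕ) : ∑' i : Fin N, f ((Nat.divModEquiv N).symm (k, i)) =
      ∑ i ∈ Finset.range N, f (N * k + i) := by
    rw [tsum_fintype, ← Fin.sum_univ_eq_sum_range (fun i ↦ f (N * k + i))]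
    simp [mul_comm]
  rw [← (Nat.divModEquiv N).symm.hasSum_iff]
  have hsum : Summable (f ∘ (Nat.divModEquiv N).symm) :=
    (summable_prod_of_nonneg fun _ ↦ hf _).2
      ⟨fun _ ↦ .of_finite, by simpa only [Function.comp_apply, hblock] using h.summable⟩
  rw [hsum.hasSum_iff, hsum.tsum_prod]
  simpa only [Function.comp_apply, hblock] using h.tsum_eq

theorem hasSum_intervalIntegral_mul_pow_div_factorial {g u : ℝ → ℝ} (hg : Continuous g)
    (hu : Continuous u) (a b : ℝ) :
    HasSum (fun n : ℕ ↦ ∫ x in a..b, g x * (u x ^ n / n !)) (∫ x in a..b, g x * exp (u x)) := by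
  have hexp (y : ℝ) : HasSum (fun n : ℕ ↦ y ^ n / n !) (exp y) :=
    exp_eq_exp_ℝ ▸ NormedSpace.expSeries_div_hasSum_exp y
  refine intervalIntegral.hasSum_integral_of_dominated_convergence
    (fun n x ↦ |g x| * (|u x| ^ n / n !))
    (fun n ↦ (by fun_prop : Continuous fun x ↦ g x * (u x ^ n / n !)).aestronglyMeasurable)
    (fun n ↦ .of_forall fun x _ ↦ by simp)
    (.of_forall fun x _ ↦ ((hexp |u x|).mul_left |g x|).summable) ?_
    (.of_forall fun x _ ↦ (hexp (u x)).mul_left (g x))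
  simp_rw [fun x ↦ ((hexp |u x|).mul_left |g x|).tsum_eq]
  exact (by fun_prop : Continuous fun x ↦ |g x| * exp |u x|).intervalIntegrable _ _

theorem hasSum_neg_one_pow_div_factorial_add (k : ℕ) :
    HasSum (fun n : ℕ ↦ (-1 : ℝ) ^ n / (n + k)!)
      ((-1) ^ k * (exp (-1) - ∑ i ∈ Finset.range k, (-1 : ℝ) ^ i / i !)) := by
  have htail := (hasSum_nat_add_iff' k).mpr
    (exp_eq_exp_ℝ ▸ NormedSpace.expSeries_div_hasSum_exp (-1 : ℝ))
  refine (htail.mul_left ((-1) ^ k)).congr_fun fun n ↦ ?_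
  rw [pow_add, ← mul_div_assoc, mul_left_comm, ← mul_pow, neg_one_mul, neg_neg, one_pow, mul_one]

noncomputable def hermiteIntegral (m k : ℕ) : ℝ :=
  ∫ x in (0 : ℝ)..1, x ^ m * (1 - x) ^ k * exp x

namespace hermiteIntegral

open intervalIntegral

theorem intervalIntegrable (m k : ℕ) :
    IntervalIntegrable (fun x : ℝ ↦ x ^ m * (1 - x) ^ k * exp x) MeasureTheory.volume 0 1 :=
  (by fun_prop : Continuous fun x : ℝ ↦ x ^ m * (1 - x) ^ k * exp x).intervalIntegrable _ _

theorem pos (m k : ℕ) : 0 < hermiteIntegral m k := by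
  refine intervalIntegral_pos_of_pos_on (intervalIntegrable m k) (fun x hx ↦ ?_) one_pos
  have : 0 < 1 - x := sub_pos.mpr hx.2
  have := hx.1
  positivity

theorem eq_add (m k : ℕ) :
    hermiteIntegral m k = hermiteIntegral (m + 1) k + hermiteIntegral m (k + 1) := by
  rw [hermiteIntegral, hermiteIntegral, hermiteIntegral,
    ← integral_add (intervalIntegrable _ _) (intervalIntegrable _ _)]
  exact integral_congr fun x _ ↦ by ring

/-- Integration by parts: `x^(m+1) (1-x)^(k+1) eˣ` vanishes at both ends. -/
theorem succ_mul_eq (m k : ℕ) :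
    (m + 1 : ℝ) * hermiteIntegral m (k + 1) =
      (k + 1) * hermiteIntegral (m + 1) k - hermiteIntegral (m + 1) (k + 1) := by
  have hderiv (x : ℝ) : HasDerivAt (fun x ↦ x ^ (m + 1) * (1 - x) ^ (k + 1) * exp x)
      ((m + 1) * (x ^ m * (1 - x) ^ (k + 1) * exp x) -
        (k + 1) * (x ^ (m + 1) * (1 - x) ^ k * exp x) +
        x ^ (m + 1) * (1 - x) ^ (k + 1) * exp x) x := by
    refine (((hasDerivAt_pow (m + 1) x).mul
      (((hasDerivAt_id x).const_sub 1).pow (k + 1))).mul (hasDerivAt_exp x)).congr_deriv ?_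
    simp only [Pi.mul_apply, Pi.pow_apply, id, Nat.add_sub_cancel]
    push_cast
    ring
  have hcomb := ((intervalIntegrable m (k + 1)).const_mul (m + 1 : ℝ)).sub
    ((intervalIntegrable (m + 1) k).const_mul (k + 1 : ℝ))
  have hftc := integral_eq_sub_of_hasDerivAt (fun x _ ↦ hderiv x)
    (hcomb.add (intervalIntegrable (m + 1) (k + 1)))
  rw [integral_add hcomb (intervalIntegrable (m + 1) (k + 1)),
    integral_sub ((intervalIntegrable m (k + 1)).const_mul _)
      ((intervalIntegrable (m + 1) k).const_mul _),
    integral_const_mul, integral_const_mul] at hftc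
  have hvanish : (1 : ℝ) ^ (m + 1) * (1 - 1) ^ (k + 1) * exp 1 -
      0 ^ (m + 1) * (1 - 0) ^ (k + 1) * exp 0 = 0 := by simp
  rw [hvanish] at hftc
  simp only [hermiteIntegral]
  linarith

theorem zero_zero : hermiteIntegral 0 0 = exp 1 - 1 := by
  simp [hermiteIntegral, integral_exp]

theorem one_zero : hermiteIntegral 1 0 = 1 := by
  have hderiv (x : ℝ) : HasDerivAt (fun x ↦ (x - 1) * exp x) (x ^ 1 * (1 - x) ^ 0 * exp x) x := by
    refine (((hasDerivAt_id x).sub_const 1).mul (hasDerivAt_exp x)).congr_deriv ?_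
    simp only [id]
    ring
  rw [hermiteIntegral, integral_eq_sub_of_hasDerivAt (fun x _ ↦ hderiv x) (intervalIntegrable 1 0)]
  simp

end hermiteIntegral

noncomputable def hermA (m : ℕ) : ℝ := hermiteIntegral m m / m !

noncomputable def hermB (m : ℕ) : ℝ := hermiteIntegral (m + 1) m / m !

noncomputable def hermC (m : ℕ) : ℝ := hermiteIntegral m (m + 1) / m !

theorem hermA_pos (m : ℕ) : 0 < hermA m := div_pos (hermiteIntegral.pos _ _) (by positivity)

theorem hermB_pos (m : ℕ) : 0 < hermB m := div_pos (hermiteIntegral.pos _ _) (by positivity)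

theorem hermC_pos (m : ℕ) : 0 < hermC m := div_pos (hermiteIntegral.pos _ _) (by positivity)

theorem hermA_eq (m : ℕ) : hermA m = hermB m + hermC m := by
  rw [hermA, hermB, hermC, hermiteIntegral.eq_add, add_div]

theorem hermB_eq (m : ℕ) : hermB m = hermC m + hermA (m + 1) := by
  have hibp := hermiteIntegral.succ_mul_eq m m
  simp only [hermA, hermB, hermC, Nat.factorial_succ]
  push_cast
  field_simp
  linear_combination -hibp

theorem hermC_eq (m : ℕ) : hermC m = 2 * (m + 1) * hermA (m + 1) + hermB (m + 1) := by
  have hibp := hermiteIntegral.succ_mul_eq m (m + 1)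
  have hsplit := hermiteIntegral.eq_add m (m + 1)
  have hsplit' := hermiteIntegral.eq_add (m + 1) (m + 1)
  simp only [hermA, hermB, hermC, Nat.factorial_succ]
  push_cast at hibp ⊢
  field_simp
  linear_combination (m + 1 : ℝ) * hsplit + hibp + hsplit'

theorem hermB_zero : hermB 0 = 1 := by
  simp [hermB, hermiteIntegral.one_zero]

theorem hermC_zero : hermC 0 = exp 1 - 2 := by
  have hsplit := hermiteIntegral.eq_add 0 0
  rw [hermiteIntegral.zero_zero, hermiteIntegral.one_zero] at hsplit
  simp only [hermC, Nat.factorial_zero, Nat.cast_one, div_one]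
  linarith

noncomputable def eRemainder (n : ℕ) : ℝ :=
  match n % 3 with
  | 0 => hermB (n / 3)
  | 1 => hermC (n / 3)
  | _ => hermA (n / 3 + 1)

def ePartialQuotient (n : ℕ) : ℤ :=
  if n = 0 then 2 else if n % 3 = 2 then 2 * (n / 3 + 1 : ℕ) else 1

theorem eRemainder_three_mul (k : ℕ) : eRemainder (3 * k) = hermB k := by
  simp [eRemainder]

theorem eRemainder_three_mul_add_one (k : ℕ) : eRemainder (3 * k + 1) = hermC k := by
  simp [eRemainder, Nat.add_mod, show (3 * k + 1) / 3 = k by omega]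

theorem eRemainder_three_mul_add_two (k : ℕ) : eRemainder (3 * k + 2) = hermA (k + 1) := by
  simp [eRemainder, Nat.add_mod, show (3 * k + 2) / 3 = k by omega]

theorem eRemainder_zero : eRemainder 0 = 1 := eRemainder_three_mul 0 ▸ hermB_zero

theorem eRemainder_one : eRemainder 1 = exp 1 - 2 := eRemainder_three_mul_add_one 0 ▸ hermC_zero

theorem ePartialQuotient_three_mul_add_one (k : ℕ) : ePartialQuotient (3 * k + 1) = 1 := by
  simp [ePartialQuotient, Nat.add_mod]

theorem ePartialQuotient_three_mul_add_two (k : ℕ) :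
    ePartialQuotient (3 * k + 2) = 2 * (k + 1) := by
  simp [ePartialQuotient, Nat.add_mod, show (3 * k + 2) / 3 = k by omega]

theorem ePartialQuotient_three_mul_add_three (k : ℕ) : ePartialQuotient (3 * k + 3) = 1 := by
  simp [ePartialQuotient]

theorem isCFRemainders_exp_one : IsCFRemainders (exp 1) ePartialQuotient eRemainder where
  pos n := by
    obtain ⟨k, rfl | rfl | rfl⟩ : ∃ k, n = 3 * k ∨ n = 3 * k + 1 ∨ n = 3 * k + 2 :=
      ⟨n / 3, by omega⟩
    · exact eRemainder_three_mul k ▸ hermB_pos k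
    · exact eRemainder_three_mul_add_one k ▸ hermC_pos k
    · exact eRemainder_three_mul_add_two k ▸ hermA_pos (k + 1)
  one_le n := by
    obtain ⟨k, rfl | rfl | rfl⟩ : ∃ k, n = 3 * k ∨ n = 3 * k + 1 ∨ n = 3 * k + 2 :=
      ⟨n / 3, by omega⟩
    · rw [ePartialQuotient_three_mul_add_one]
    · rw [ePartialQuotient_three_mul_add_two]; omega
    · rw [ePartialQuotient_three_mul_add_three]
  recurrence n := by
    obtain ⟨k, rfl | rfl | rfl⟩ : ∃ k, n = 3 * k ∨ n = 3 * k + 1 ∨ n = 3 * k + 2 :=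
      ⟨n / 3, by omega⟩
    · rw [ePartialQuotient_three_mul_add_one, eRemainder_three_mul, eRemainder_three_mul_add_one,
        eRemainder_three_mul_add_two, hermB_eq]
      push_cast; ring
    · rw [ePartialQuotient_three_mul_add_two, eRemainder_three_mul_add_one,
        eRemainder_three_mul_add_two, show 3 * k + 1 + 2 = 3 * (k + 1) by ring,
        eRemainder_three_mul, hermC_eq]
      push_cast; ring
    · rw [ePartialQuotient_three_mul_add_three, eRemainder_three_mul_add_two,
        show 3 * k + 2 + 1 = 3 * (k + 1) by ring, show 3 * k + 2 + 2 = 3 * (k + 1) + 1 by ring,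
        eRemainder_three_mul, eRemainder_three_mul_add_one, hermA_eq]
      push_cast; ring
  init := by
    rw [eRemainder_zero, eRemainder_one]
    simp [ePartialQuotient]

theorem hermB_eq_integral (k : ℕ) :
    hermB k = ∫ x in (0 : ℝ)..1, x * exp x * ((x * (1 - x)) ^ k / k !) := by
  rw [hermB, hermiteIntegral, ← intervalIntegral.integral_div]
  exact intervalIntegral.integral_congr fun x _ ↦ by rw [mul_pow]; ring

theorem hasSum_hermB : HasSum hermB (∫ x in (0 : ℝ)..1, x * exp x * exp (x * (1 - x))) := by
  simpa only [← hermB_eq_integral] using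
    hasSum_intervalIntegral_mul_pow_div_factorial (g := fun x ↦ x * exp x)
      (u := fun x ↦ x * (1 - x)) (by fun_prop) (by fun_prop) 0 1

theorem hasSum_eRemainder :
    HasSum eRemainder (2 * ∫ x in (0 : ℝ)..1, x * exp x * exp (x * (1 - x))) := by
  refine hasSum_of_nonneg_of_hasSum_sum_range_mul_add
    (fun n ↦ (isCFRemainders_exp_one.pos n).le) 3 ((hasSum_hermB.mul_left 2).congr_fun fun k ↦ ?_)
  simp only [Finset.sum_range_succ, Finset.sum_range_zero, zero_add, add_zero,
    eRemainder_three_mul, eRemainder_three_mul_add_one, eRemainder_three_mul_add_two]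
  rw [hermB_eq k]
  ring

theorem integral_one_sub_mul_exp_two_mul_sub_sq :
    ∫ x in (0 : ℝ)..1, (1 - x) * exp (2 * x - x ^ 2) = (exp 1 - 1) / 2 := by
  have hderiv (x : ℝ) : HasDerivAt (fun x ↦ exp (2 * x - x ^ 2) / 2)
      ((1 - x) * exp (2 * x - x ^ 2)) x := by
    refine ((((hasDerivAt_id x).const_mul 2).sub
      (hasDerivAt_pow 2 x)).exp.div_const 2).congr_deriv ?_
    simp only [Pi.sub_apply, id]
    ring
  rw [intervalIntegral.integral_eq_sub_of_hasDerivAt (fun x _ ↦ hderiv x)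
    ((by fun_prop : Continuous fun x : ℝ ↦ (1 - x) * exp (2 * x - x ^ 2)).intervalIntegrable _ _)]
  norm_num
  ring

theorem integral_mul_exp_mul_exp_mul_one_sub :
    ∫ x in (0 : ℝ)..1, x * exp x * exp (x * (1 - x)) =
      exp 1 * (∫ x in (0 : ℝ)..1, exp (-x ^ 2)) - (exp 1 - 1) / 2 := by
  have hsplit (x : ℝ) : x * exp x * exp (x * (1 - x)) =
      exp 1 * exp (-(1 - x) ^ 2) - (1 - x) * exp (2 * x - x ^ 2) := by
    rw [mul_assoc, ← exp_add, ← exp_add]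
    ring_nf
  have hreflect : ∫ x in (0 : ℝ)..1, exp (-(1 - x) ^ 2) = ∫ x in (0 : ℝ)..1, exp (-x ^ 2) := by
    simpa using intervalIntegral.integral_comp_sub_left (fun x : ℝ ↦ exp (-x ^ 2)) (a := 0) (b := 1) 1
  simp_rw [hsplit]
  rw [intervalIntegral.integral_sub
      ((by fun_prop : Continuous fun x : ℝ ↦ exp 1 * exp (-(1 - x) ^ 2)).intervalIntegrable _ _)
      ((by fun_prop : Continuous fun x : ℝ ↦ (1 - x) * exp (2 * x - x ^ 2)).intervalIntegrable _ _),
    intervalIntegral.integral_const_mul, hreflect, integral_one_sub_mul_exp_two_mul_sub_sq]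

theorem hasSum_integral_exp_neg_sq :
    HasSum (fun n : ℕ ↦ (-1 : ℝ) ^ n / (n ! * (2 * n + 1))) (∫ x in (0 : ℝ)..1, exp (-x ^ 2)) := by
  have h := hasSum_intervalIntegral_mul_pow_div_factorial (g := fun _ ↦ 1)
      (u := fun x ↦ -x ^ 2) continuous_const (by fun_prop) 0 1
  simp only [one_mul] at h
  refine h.congr_fun fun n ↦ ?_
  have hterm (x : ℝ) : (-x ^ 2) ^ n / n ! = (-1) ^ n / n ! * x ^ (2 * n) := by
    rw [neg_pow, pow_mul]
    ring
  simp_rw [hterm, intervalIntegral.integral_const_mul, integral_pow]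
  push_cast
  field_simp
  ring

theorem hasSum_neg_one_pow_div_factorial_mul_quadratic {T : ℝ}
    (hT : HasSum (fun n : ℕ ↦ (-1 : ℝ) ^ n / (n ! * (2 * n + 1))) T) :
    HasSum (fun n : ℕ ↦ (-1 : ℝ) ^ n / ((n + 1)! * (2 * (n : ℝ) ^ 2 + 7 * n + 3)))
      ((8 * T - 3) / 10) := by
  have h₁ := hasSum_neg_one_pow_div_factorial_add 1
  have h₂ := hasSum_neg_one_pow_div_factorial_add 2
  have h₃ := hasSum_neg_one_pow_div_factorial_add 3
  -- the coefficients come from the partial fractions of `1 / ((n + 1)(2n + 1)(n + 3))`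
  have hsum := (((hT.mul_left (4 / 5)).sub (h₁.mul_left (2 / 5))).sub (h₂.mul_left (1 / 5))).add
    (h₃.mul_left (1 / 5))
  norm_num [Finset.sum_range_succ] at hsum
  have hval : 4 / 5 * T - 2 / 5 * (1 - exp (-1)) - 1 / 5 * exp (-1) + 1 / 5 * (1 / 2 - exp (-1)) =
      (8 * T - 3) / 10 := by ring
  refine hval ▸ hsum.congr_fun fun n ↦ ?_
  have hf₁ : ((n + 1)! : ℝ) = (n + 1) * n ! := by push_cast [Nat.factorial]; ring
  have hf₂ : ((n + 2)! : ℝ) = (n + 2) * (n + 1) * n ! := by push_cast [Nat.factorial]; ring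
  have hf₃ : ((n + 3)! : ℝ) = (n + 3) * (n + 2) * (n + 1) * n ! := by
    push_cast [Nat.factorial]; ring
  rw [hf₁, hf₂, hf₃]
  field_simp
  ring

theorem errorSum_e_series_formula :
    (∑' n : ℕ, |cfDen (Real.exp 1) n * Real.exp 1 - cfNum (Real.exp 1) n|) =
      (Real.exp 1 / 4) *
        (-1 + 10 * ∑' n : ℕ, (-1 : ℝ) ^ n /
          (((n + 1).factorial : ℝ) * (2 * (n : ℝ) ^ 2 + 7 * (n : ℝ) + 3))) := by
  have herror (n : ℕ) : |cfDen (exp 1) n * exp 1 - cfNum (exp 1) n| = eRemainder (n + 1) := by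
    rw [isCFRemainders_exp_one.abs_den_mul_sub_num, eRemainder_zero, div_one]
  rw [tsum_congr herror, ((hasSum_nat_add_iff' 1).mpr hasSum_eRemainder).tsum_eq,
    (hasSum_neg_one_pow_div_factorial_mul_quadratic hasSum_integral_exp_neg_sq).tsum_eq,
    integral_mul_exp_mul_exp_mul_one_sub, Finset.sum_range_one, eRemainder_zero]
  ring
end

section
/- The regular continued fraction expansion of the real number 4·(11·sin(1/2) − 6·cos(1/2)) / (53·cos(1/2) − 97·sin(1/2)) is [a₀; a₁, a₂, ...] where a₀ = 4, a₁ = 3, and for every integer k ≥ 1, a_{2k} = 4 and a_{2k+1} = k + 3 (i.e., the expansion is [4; 3, 4, 4, 4, 5, 4, 6, 4, 7, 4, ...]). -/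
/-!
Let `c n = x j_{n-1}(x)` at `x = 1/2`, where `j` are the spherical Bessel functions. Then
`c 0 = cos (1/2)`, `c 1 = sin (1/2)` and `c (n + 2) = (4n + 2) c (n + 1) - c n`; the power series
of `c n` is alternating with rapidly decreasing terms, so `c` is positive and decreasing, whence
`(4n + 1) c (n + 1) < c n < (4n + 2) c (n + 1)`. Thus `u n = 4 c n / (c n - c (n + 1))` and
`w n = (c n - c (n + 1)) / (4 c (n + 1))` satisfy `u n = 4 + 1 / w n` and `w n = n + 1 / u (n + 1)`
with `u n, w n > 1` for `n ≥ 1`, so `u n = [4; n, 4, n + 1, 4, n + 2, …]`. The recurrence gives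
`c 3 = 11 sin (1/2) - 6 cos (1/2)` and `c 4 = 108 sin (1/2) - 59 cos (1/2)`, so the number in
question is `u 3`.
-/

open Nat Filter GenContFract

theorem Int.floor_intCast_add_inv {K : Type*} [Field K] [LinearOrder K] [IsStrictOrderedRing K]
    [FloorRing K] (a : ℤ) {y : K} (hy : 1 < y) : ⌊a + y⁻¹⌋ = a := by
  rw [Int.floor_intCast_add, Int.floor_eq_zero_iff.2, add_zero]
  exact ⟨inv_nonneg.2 (by linarith), inv_lt_one_of_one_lt₀ hy⟩

theorem Int.fract_intCast_add_inv {K : Type*} [Field K] [LinearOrder K] [IsStrictOrderedRing K]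
    [FloorRing K] (a : ℤ) {y : K} (hy : 1 < y) : Int.fract (a + y⁻¹) = y⁻¹ := by
  rw [Int.fract_intCast_add, Int.fract_eq_self]
  exact ⟨inv_nonneg.2 (by linarith), inv_lt_one_of_one_lt₀ hy⟩

namespace GenContFract

variable {K : Type*} [Field K] [LinearOrder K] [IsStrictOrderedRing K] [FloorRing K]
  {a : ℤ} {y : K}

theorem of_intCast_add_inv_h (hy : 1 < y) : (GenContFract.of (a + y⁻¹)).h = a := by
  rw [of_h_eq_floor, Int.floor_intCast_add_inv a hy]

theorem of_intCast_add_inv_partDens_get?_zero (hy : 1 < y) :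
    (GenContFract.of (a + y⁻¹)).partDens.get? 0 = some (GenContFract.of y).h := by
  have h : (GenContFract.of (a + y⁻¹)).s.get? 0 = _ :=
    of_s_head (by rw [Int.fract_intCast_add_inv a hy]; positivity)
  rw [Int.fract_intCast_add_inv a hy, inv_inv, ← of_h_eq_floor] at h
  rw [partDens, Stream'.Seq.map_get?, h, Option.map_some]

theorem of_intCast_add_inv_partDens_get?_succ (hy : 1 < y) (n : ℕ) :
    (GenContFract.of (a + y⁻¹)).partDens.get? (n + 1) = (GenContFract.of y).partDens.get? n := by
  rw [partDens, Stream'.Seq.map_get?, of_s_succ, Int.fract_intCast_add_inv a hy, inv_inv,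
    ← Stream'.Seq.map_get?, ← partDens]

end GenContFract

namespace Hetyei

noncomputable def besselTerm (n m : ℕ) : ℝ := (m + n)! / (m ! * (2 * (m + n))! * 4 ^ m)

theorem besselTerm_pos (n m : ℕ) : 0 < besselTerm n m := by
  unfold besselTerm; positivity

theorem besselTerm_succ (n m : ℕ) :
    besselTerm n (m + 1) = besselTerm n m / (8 * (m + 1) * (2 * (m + n) + 1)) := by
  simp only [besselTerm, show m + 1 + n = (m + n) + 1 by ring,
    show 2 * (m + n + 1) = 2 * (m + n) + 1 + 1 by ring, factorial_succ]
  push_cast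
  field_simp
  ring

theorem besselTerm_succ_le (n m : ℕ) : besselTerm n (m + 1) ≤ besselTerm n m / 8 := by
  rw [besselTerm_succ]
  gcongr
  · exact (besselTerm_pos n m).le
  · nlinarith [(m.cast_nonneg : (0 : ℝ) ≤ m), (n.cast_nonneg : (0 : ℝ) ≤ n)]

theorem antitone_besselTerm (n : ℕ) : Antitone (besselTerm n) :=
  antitone_nat_of_succ_le fun m ↦ (besselTerm_succ_le n m).trans (by linarith [besselTerm_pos n m])

theorem besselTerm_zero (n : ℕ) : besselTerm n 0 = (4 * n + 2) * besselTerm (n + 1) 0 := by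
  simp only [besselTerm, zero_add, show 2 * (n + 1) = 2 * n + 1 + 1 by ring, factorial_succ]
  push_cast
  field_simp
  ring

theorem besselTerm_succ_eq_add (n m : ℕ) :
    besselTerm n (m + 1) = (4 * n + 2) * besselTerm (n + 1) (m + 1) + besselTerm (n + 2) m := by
  simp only [besselTerm, show m + 1 + n = (m + n) + 1 by ring,
    show m + 1 + (n + 1) = (m + n) + 1 + 1 by ring, show m + (n + 2) = (m + n) + 1 + 1 by ring,
    show 2 * (m + n + 1 + 1) = 2 * (m + n) + 1 + 1 + 1 + 1 by ring,
    show 2 * (m + n + 1) = 2 * (m + n) + 1 + 1 by ring, factorial_succ]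
  push_cast
  field_simp
  ring

theorem half_pow_two_mul (m : ℕ) : (1 / 2 : ℝ) ^ (2 * m) = (4 ^ m)⁻¹ := by
  rw [pow_mul, ← inv_pow]; norm_num

theorem besselTerm_zero_left (m : ℕ) : besselTerm 0 m = (1 / 2) ^ (2 * m) / (2 * m)! := by
  rw [half_pow_two_mul, besselTerm, add_zero]
  field_simp

theorem besselTerm_one_left (m : ℕ) :
    besselTerm 1 m = (1 / 2) ^ (2 * m + 1) / (2 * m + 1)! := by
  rw [pow_succ, half_pow_two_mul, besselTerm, show 2 * (m + 1) = 2 * m + 1 + 1 by ring,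
    factorial_succ, factorial_succ]
  push_cast
  field_simp
  ring

/-- `bessel n = x j_{n-1}(x)` at `x = 1/2`, where `j` are the spherical Bessel functions
(`j_{-1}(x) = cos x / x`). -/
noncomputable def bessel (n : ℕ) : ℝ := ∑' m, (-1) ^ m * besselTerm n m

theorem hasSum_bessel (n : ℕ) : HasSum (fun m ↦ (-1) ^ m * besselTerm n m) (bessel n) := by
  refine (summable_of_ratio_norm_eventually_le (r := 1 / 8) (by norm_num)
    (Eventually.of_forall fun m ↦ ?_)).hasSum
  simp only [norm_mul, norm_pow, norm_neg, norm_one, one_pow, one_mul, Real.norm_eq_abs,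
    abs_of_pos (besselTerm_pos _ _)]
  linarith [besselTerm_succ_le n m]

theorem bessel_zero : bessel 0 = Real.cos (1 / 2) :=
  (hasSum_bessel 0).unique <| by
    simpa only [besselTerm_zero_left, mul_div_assoc] using Real.hasSum_cos (1 / 2)

theorem bessel_one : bessel 1 = Real.sin (1 / 2) :=
  (hasSum_bessel 1).unique <| by
    simpa only [besselTerm_one_left, mul_div_assoc] using Real.hasSum_sin (1 / 2)

theorem bessel_add_two (n : ℕ) :
    bessel (n + 2) = (4 * n + 2) * bessel (n + 1) - bessel n := by
  have h := (hasSum_nat_add_iff' 1).mpr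
    ((hasSum_bessel n).sub ((hasSum_bessel (n + 1)).mul_left (4 * (n : ℝ) + 2)))
  simp only [Finset.sum_range_one, pow_zero, one_mul, besselTerm_zero n, sub_self,
    sub_zero] at h
  have hterm : (fun m ↦ (-1) ^ (m + 1) * besselTerm n (m + 1) -
      (4 * n + 2) * ((-1) ^ (m + 1) * besselTerm (n + 1) (m + 1))) =
      fun m ↦ -((-1) ^ m * besselTerm (n + 2) m) := by
    funext m
    rw [besselTerm_succ_eq_add]
    ring
  rw [hterm] at h
  linarith [h.unique (hasSum_bessel (n + 2)).neg]

theorem bessel_le_besselTerm_zero (n : ℕ) : bessel n ≤ besselTerm n 0 := by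
  simpa using (antitone_besselTerm n).tendsto_le_alternating_series
    (hasSum_bessel n).tendsto_sum_nat 0

theorem besselTerm_zero_le_bessel (n : ℕ) : 7 / 8 * besselTerm n 0 ≤ bessel n := by
  have h := (antitone_besselTerm n).alternating_series_le_tendsto
    (hasSum_bessel n).tendsto_sum_nat 1
  simp only [Finset.sum_range_succ, Finset.range_zero, Finset.sum_empty] at h
  linarith [besselTerm_succ_le n 0]

theorem bessel_pos (n : ℕ) : 0 < bessel n := by
  linarith [besselTerm_zero_le_bessel n, besselTerm_pos n 0]

theorem bessel_succ_lt (n : ℕ) : bessel (n + 1) < bessel n :=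
  calc bessel (n + 1) ≤ besselTerm (n + 1) 0 := bessel_le_besselTerm_zero (n + 1)
    _ ≤ besselTerm n 0 / 2 := by
      rw [besselTerm_zero n]
      nlinarith [besselTerm_pos (n + 1) 0, (n.cast_nonneg : (0 : ℝ) ≤ n)]
    _ < 7 / 8 * besselTerm n 0 := by linarith [besselTerm_pos n 0]
    _ ≤ bessel n := besselTerm_zero_le_bessel n

structure IsPosDecreasingSolution (c : ℕ → ℝ) : Prop where
  pos : ∀ n, 0 < c n
  succ_lt : ∀ n, c (n + 1) < c n
  add_two : ∀ n, c (n + 2) = (4 * n + 2) * c (n + 1) - c n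

theorem bessel_isPosDecreasingSolution : IsPosDecreasingSolution bessel :=
  ⟨bessel_pos, bessel_succ_lt, bessel_add_two⟩

noncomputable def evenQuot (c : ℕ → ℝ) (n : ℕ) : ℝ := 4 * c n / (c n - c (n + 1))

noncomputable def oddQuot (c : ℕ → ℝ) (n : ℕ) : ℝ := (c n - c (n + 1)) / (4 * c (n + 1))

namespace IsPosDecreasingSolution

variable {c : ℕ → ℝ}

theorem mul_succ_lt (hc : IsPosDecreasingSolution c) (n : ℕ) :
    (4 * n + 1) * c (n + 1) < c n := by
  linarith [hc.add_two n, hc.succ_lt (n + 1)]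

theorem one_lt_evenQuot (hc : IsPosDecreasingSolution c) (n : ℕ) : 1 < evenQuot c n := by
  have := hc.succ_lt n
  rw [evenQuot, one_lt_div (by linarith)]
  linarith [hc.pos (n + 1), hc.pos n]

theorem one_lt_oddQuot (hc : IsPosDecreasingSolution c) {n : ℕ} (hn : 1 ≤ n) :
    1 < oddQuot c n := by
  have := hc.pos (n + 1)
  rw [oddQuot, one_lt_div (by linarith)]
  have : (1 : ℝ) ≤ n := by exact_mod_cast hn
  nlinarith [hc.mul_succ_lt n]

theorem evenQuot_eq (hc : IsPosDecreasingSolution c) (n : ℕ) :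
    evenQuot c n = (4 : ℤ) + (oddQuot c n)⁻¹ := by
  have := sub_ne_zero.2 (hc.succ_lt n).ne'
  have := (hc.pos (n + 1)).ne'
  rw [evenQuot, oddQuot, inv_div]
  push_cast
  field_simp
  ring

theorem oddQuot_eq (hc : IsPosDecreasingSolution c) (n : ℕ) :
    oddQuot c n = (n : ℤ) + (evenQuot c (n + 1))⁻¹ := by
  have := (hc.pos (n + 1)).ne'
  rw [evenQuot, oddQuot, inv_div, hc.add_two]
  field_simp
  push_cast
  ring

theorem of_evenQuot_h (hc : IsPosDecreasingSolution c) {n : ℕ} (hn : 1 ≤ n) :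
    (GenContFract.of (evenQuot c n)).h = 4 := by
  rw [hc.evenQuot_eq, of_intCast_add_inv_h (hc.one_lt_oddQuot hn), Int.cast_ofNat]

theorem of_evenQuot_partDens_get?_zero (hc : IsPosDecreasingSolution c) {n : ℕ} (hn : 1 ≤ n) :
    (GenContFract.of (evenQuot c n)).partDens.get? 0 = some (n : ℝ) := by
  rw [hc.evenQuot_eq, of_intCast_add_inv_partDens_get?_zero (hc.one_lt_oddQuot hn),
    hc.oddQuot_eq, of_intCast_add_inv_h (hc.one_lt_evenQuot _), Int.cast_natCast]

theorem of_evenQuot_partDens_get?_one (hc : IsPosDecreasingSolution c) {n : ℕ} (hn : 1 ≤ n) :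
    (GenContFract.of (evenQuot c n)).partDens.get? 1 = some 4 := by
  rw [hc.evenQuot_eq, of_intCast_add_inv_partDens_get?_succ (hc.one_lt_oddQuot hn),
    hc.oddQuot_eq, of_intCast_add_inv_partDens_get?_zero (hc.one_lt_evenQuot _),
    hc.of_evenQuot_h (by omega)]

theorem of_evenQuot_partDens_get?_add_two (hc : IsPosDecreasingSolution c) {n : ℕ}
    (hn : 1 ≤ n) (m : ℕ) : (GenContFract.of (evenQuot c n)).partDens.get? (m + 2) =
      (GenContFract.of (evenQuot c (n + 1))).partDens.get? m := by
  rw [hc.evenQuot_eq, of_intCast_add_inv_partDens_get?_succ (hc.one_lt_oddQuot hn),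
    hc.oddQuot_eq, of_intCast_add_inv_partDens_get?_succ (hc.one_lt_evenQuot _)]

theorem of_evenQuot_partDens_get? (hc : IsPosDecreasingSolution c) {n : ℕ} (hn : 1 ≤ n)
    (k : ℕ) :
    (GenContFract.of (evenQuot c n)).partDens.get? (2 * k) = some ((n + k : ℕ) : ℝ) ∧
      (GenContFract.of (evenQuot c n)).partDens.get? (2 * k + 1) = some 4 := by
  induction k generalizing n with
  | zero => exact ⟨hc.of_evenQuot_partDens_get?_zero hn, hc.of_evenQuot_partDens_get?_one hn⟩
  | succ k ih =>
    rw [show 2 * (k + 1) = 2 * k + 2 by ring, show 2 * k + 2 + 1 = 2 * k + 1 + 2 by ring,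
      hc.of_evenQuot_partDens_get?_add_two hn, hc.of_evenQuot_partDens_get?_add_two hn,
      show n + (k + 1) = n + 1 + k by ring]
    exact ih (by omega)

end IsPosDecreasingSolution

theorem evenQuot_bessel_three :
    evenQuot bessel 3 = 4 * (11 * Real.sin (1 / 2) - 6 * Real.cos (1 / 2)) /
      (53 * Real.cos (1 / 2) - 97 * Real.sin (1 / 2)) := by
  have h2 := bessel_add_two 0
  have h3 := bessel_add_two 1
  have h4 := bessel_add_two 2
  norm_num [bessel_zero, bessel_one] at h2 h3 h4
  rw [evenQuot, h4, h3, h2]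
  ring_nf

end Hetyei

theorem hetyei_contFract :
    let α : ℝ := 4 * (11 * Real.sin (1 / 2) - 6 * Real.cos (1 / 2)) /
      (53 * Real.cos (1 / 2) - 97 * Real.sin (1 / 2))
    (GenContFract.of α).h = 4 ∧
      (GenContFract.of α).partDens.get? 0 = some 3 ∧
      ∀ k : ℕ, 1 ≤ k →
        (GenContFract.of α).partDens.get? (2 * k - 1) = some 4 ∧
        (GenContFract.of α).partDens.get? (2 * k) = some ((k : ℝ) + 3) := by
  intro α
  have hc := Hetyei.bessel_isPosDecreasingSolution
  have hpartDens := hc.of_evenQuot_partDens_get? (n := 3) (by norm_num)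
  rw [show α = Hetyei.evenQuot Hetyei.bessel 3 from Hetyei.evenQuot_bessel_three.symm]
  refine ⟨hc.of_evenQuot_h (by norm_num), by simpa using (hpartDens 0).1, fun k hk ↦ ?_⟩
  obtain ⟨j, rfl⟩ : ∃ j, k = j + 1 := ⟨k - 1, by omega⟩
  refine ⟨by simpa [show 2 * (j + 1) - 1 = 2 * j + 1 by omega] using (hpartDens j).2, ?_⟩
  simpa [add_comm] using (hpartDens (j + 1)).1
end
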